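/- arXiv:2603.03257 — 3 statements merged into one kernel-verified Lean document; each statement's English description precedes it below -/
import Mathlib

section
/- Let G=(V,E) be an infinite locally finite graph, let q ∈ [0,1] and ε ∈ (0,1), let S be a finite set of vertices, and let t be a positive integer. Let ω and ζ be independent percolation configurations with ω ~ P_q and ζ ~ P_ε. Let E be the event that the cluster of S in ω ∪ ζ is finite and that at least t edges e ∈ ∂C_S(ω ∪ ζ) satisfy e ↔^ω ∞ (i.e., an endpoint of e lies in an infinite cluster of ω). Then P(E) ≤ (1-ε)^t. -/
/-!
Record the `(ω ∪ ζ)`-cluster `A` of `S`, the set `F` of its boundary edges touching an infinite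
`ω`-cluster, and the `ω`- and `ζ`-open edges inside `A`. The event is covered by the union, over
all such records, of products of an `ω`-event and a `ζ`-event, and the `ζ`-event asks in
particular that `t` chosen edges of `F` be `ζ`-closed, which costs a factor `(1 - ε) ^ t`.
Without that requirement the product events are pairwise disjoint, so their probabilities sum to
at most `1`: an open path of one candidate cluster that leaves another must cross the boundary of
the latter through a `ζ`-open edge of its `F`, which touches an infinite `ω`-cluster although
every vertex of both candidates has a finite `ω`-cluster.
-/

open MeasureTheory Set

noncomputable section

namespace Perco

variable {V : Type*}

/-- The set of (potential) edges both of whose endpoints lie in `A`. -/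
def edgesWithin (A : Set V) : Set (Sym2 V) := {e | ∀ v ∈ e, v ∈ A}

/-- The spanning subgraph of `G` consisting of those edges of `G` lying in `F`. -/
def openGraph (G : SimpleGraph V) (F : Set (Sym2 V)) : SimpleGraph V where
  Adj u v := G.Adj u v ∧ s(u, v) ∈ F
  symm := ⟨fun u v h => ⟨h.1.symm, by rw [Sym2.eq_swap]; exact h.2⟩⟩
  loopless := ⟨fun v h => G.loopless.irrefl v h.1⟩

/-- The union of the clusters of the vertices of `S` in the configuration whose set of open
edges is `F`. -/
def cluster (G : SimpleGraph V) (F : Set (Sym2 V)) (S : Set V) : Set V :=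
  {v | ∃ u ∈ S, (openGraph G F).Reachable u v}

/-- `L` and `R` are connected by a path of edges of `G` lying in `F`. -/
def ConnVia (G : SimpleGraph V) (F : Set (Sym2 V)) (L R : Set V) : Prop :=
  ∃ u ∈ L, ∃ v ∈ R, (openGraph G F).Reachable u v

/-- The edge boundary `∂S`: edges of `G` with exactly one endpoint in `S`. -/
def edgeBdry (G : SimpleGraph V) (S : Set V) : Set (Sym2 V) :=
  {e | ∃ u v, G.Adj u v ∧ e = s(u, v) ∧ u ∈ S ∧ v ∉ S}

/-- The set of vertices at graph distance at most `r` from the set `A`. -/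
def ball (G : SimpleGraph V) (A : Set V) (r : ℕ) : Set V :=
  {v | ∃ u ∈ A, G.Reachable u v ∧ G.dist u v ≤ r}

/-- The set of open edges of a configuration `ω` on an edge set `F`. -/
def openOf {F : Set (Sym2 V)} (ω : F → Bool) : Set (Sym2 V) :=
  {e | ∃ h : e ∈ F, ω ⟨e, h⟩ = true}

/-- `μ` is the Bernoulli(`p`) product (percolation) measure on `{0,1}^E`: it is a probability
measure giving every finite cylinder event its product probability. -/
def IsBernoulli {E : Type*} (p : ℝ) (μ : Measure (E → Bool)) : Prop :=
  IsProbabilityMeasure μ ∧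
    ∀ (J : Finset E) (σ : E → Bool),
      μ {ω | ∀ e ∈ J, ω e = σ e} =
        ∏ e ∈ J, if σ e = true then ENNReal.ofReal p else ENNReal.ofReal (1 - p)

/-- The isoperimetric function `Φ(n)`. -/
def phi (G : SimpleGraph V) (n : ℕ) : ℕ :=
  sInf {m | ∃ S : Finset V, n ≤ S.card ∧ (edgeBdry G ↑S).ncard = m}

/-- `Φ(W)`: the minimal size of `∂S` over finite `S ⊇ W`. -/
def phiSet (G : SimpleGraph V) (W : Set V) : ℕ :=
  sInf {m | ∃ S : Finset V, W ⊆ ↑S ∧ (edgeBdry G ↑S).ncard = m}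

/-- The critical probability `p_c` of `G` (with distinguished vertex `o`). -/
def pc (G : SimpleGraph V) (o : V) : ℝ :=
  sInf {p | p ∈ Icc (0 : ℝ) 1 ∧
    ∃ μ : Measure (↥G.edgeSet → Bool), IsBernoulli p μ ∧
      0 < μ {ω | (cluster G (openOf ω) {o}).Infinite}}

/-- `G` is (vertex-)transitive. -/
def IsTransitive (G : SimpleGraph V) : Prop := ∀ u v : V, ∃ φ : G ≃g G, φ u = v

/-- `G` is locally finite. -/
def LocFin (G : SimpleGraph V) : Prop := ∀ v : V, (G.neighborSet v).Finite

/-- `W` is a vertex cutset from `L` to `R`: after deleting `W`, no path from `L` to `R`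
remains. -/
def VertexCutset (G : SimpleGraph V) (W L R : Set V) : Prop :=
  ¬ ConnVia G (edgesWithin Wᶜ) (L \ W) (R \ W)

/-- The hypercubic lattice `ℤ^d`. -/
def latticeGraph (d : ℕ) : SimpleGraph (Fin d → ℤ) where
  Adj x y := ∑ i, |x i - y i| = 1
  symm := ⟨fun x y h => by simpa [abs_sub_comm] using h⟩
  loopless := ⟨fun x h => by simp at h⟩

/-- The diameter of a set of vertices, measured in the graph metric of `G`. -/
def setDiam (G : SimpleGraph V) (A : Set V) : ℕ :=
  sSup {k | ∃ u ∈ A, ∃ v ∈ A, G.dist u v = k}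

/-- The annulus `A_{k,r}` of vertices of `A` whose distance to `o` lies in `[k-r, k+r]`. -/
def annulus (G : SimpleGraph V) (A : Set V) (o : V) (k r : ℕ) : Set V :=
  {v | v ∈ A ∧ (k : ℤ) - (r : ℤ) ≤ (G.dist o v : ℤ) ∧ (G.dist o v : ℤ) ≤ (k : ℤ) + (r : ℤ)}

end Perco

lemma measurable_forall_mem {Ω ι : Type*} [MeasurableSpace Ω] {X : Set ι}
    (hX : X.Countable) {p : ι → Ω → Prop} (hp : ∀ i ∈ X, Measurable (p i)) :
    Measurable fun ω => ∀ i ∈ X, p i ω := by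
  rw [← measurableSet_setOfPred]
  simp only [ofPred_forall]
  exact .biInter hX fun i hi => (hp i hi).setOf

lemma measurableSet_setOf_infinite {Ω α : Type*} [MeasurableSpace Ω] {R : Set α}
    (hR : R.Countable) {s : Ω → Set α} (hsR : ∀ ω, s ω ⊆ R)
    (hs : ∀ a, MeasurableSet {ω | a ∈ s ω}) : MeasurableSet {ω | (s ω).Infinite} := by
  have : Countable R := hR.to_subtype
  have key : {ω | (s ω).Infinite} = ⋂ K : Finset R, ⋃ a ∉ K, {ω | ↑a ∈ s ω} := by
    ext ω
    simp only [mem_ofPred_eq, mem_iInter, mem_iUnion, exists_prop]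
    refine ⟨fun hinf K => ?_, fun h hfin => ?_⟩
    · obtain ⟨a, ha, haK⟩ := (hinf.sdiff (K.finite_toSet.image Subtype.val)).nonempty
      exact ⟨⟨a, hsR ω ha⟩, fun h => haK ⟨_, h, rfl⟩, ha⟩
    · obtain ⟨a, haK, ha⟩ := h (hfin.preimage Subtype.val_injective.injOn).toFinset
      exact haK (by simpa using ha)
  rw [key]
  exact .iInter fun K => .iUnion fun a => .iUnion fun _ => hs a

lemma countable_setOf_finset_subset {α : Type*} {R : Set α} (hR : R.Countable) :
    {A : Finset α | ↑A ⊆ R}.Countable := by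
  refine ((countable_ofPred_finite_subset hR).preimage Finset.coe_injective).mono ?_
  exact fun A hA => ⟨A.finite_toSet, hA⟩

namespace Perco

variable {V : Type*} {G : SimpleGraph V}

section Clusters

variable {F F' : Set (Sym2 V)} {S A : Set V}

variable (G) in
def innerEdges (A : Set V) : Set (Sym2 V) := G.edgeSet ∩ edgesWithin A

lemma openGraph_le (F : Set (Sym2 V)) : openGraph G F ≤ G := fun _ _ h => h.1

lemma edgeSet_openGraph (F : Set (Sym2 V)) : (openGraph G F).edgeSet = G.edgeSet ∩ F := by
  ext e
  induction e using Sym2.ind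
  rfl

lemma mem_cluster_of_adj {a b : V} (ha : a ∈ cluster G F S) (hab : (openGraph G F).Adj a b) :
    b ∈ cluster G F S :=
  let ⟨u, hu, hua⟩ := ha
  ⟨u, hu, hua.trans hab.reachable⟩

lemma subset_cluster : S ⊆ cluster G F S := fun v hv => ⟨v, hv, .refl v⟩

lemma cluster_mono (h : F ⊆ F') (S : Set V) : cluster G F S ⊆ cluster G F' S :=
  fun _ ⟨u, hu, hr⟩ =>
    ⟨u, hu, hr.mono fun _ _ (hadj : (openGraph G F).Adj _ _) => ⟨hadj.1, h hadj.2⟩⟩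

lemma cluster_singleton_subset {v : V} (hv : v ∈ cluster G F S) :
    cluster G F {v} ⊆ cluster G F S := by
  rintro x ⟨_, rfl, hvx⟩
  obtain ⟨u, hu, huv⟩ := hv
  exact ⟨u, hu, huv.trans hvx⟩

lemma cluster_subset_reachable : cluster G F S ⊆ {v | ∃ u ∈ S, G.Reachable u v} :=
  fun _ ⟨u, hu, hr⟩ => ⟨u, hu, hr.mono (openGraph_le F)⟩

lemma cluster_subset_cluster_inter_innerEdges :
    cluster G F S ⊆ cluster G (F ∩ innerEdges G (cluster G F S)) S := by
  rintro v ⟨u, hu, huv⟩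
  refine ⟨u, hu, ?_⟩
  rw [SimpleGraph.reachable_iff_reflTransGen] at huv ⊢
  induction huv with
  | refl => rfl
  | @tail x y _ hxy ih =>
    have hx : x ∈ cluster G F S := ⟨u, hu, by rwa [SimpleGraph.reachable_iff_reflTransGen]⟩
    have hy := mem_cluster_of_adj hx hxy
    refine ih.tail ⟨hxy.1, hxy.2, hxy.1, fun w hw => ?_⟩
    rcases Sym2.mem_iff.1 hw with rfl | rfl <;> assumption

lemma notMem_of_mem_edgeBdry_cluster {e : Sym2 V} (he : e ∈ edgeBdry G (cluster G F S)) :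
    e ∉ F := by
  rintro hF
  obtain ⟨u, v, hadj, rfl, hu, hv⟩ := he
  exact hv (mem_cluster_of_adj hu ⟨hadj, hF⟩)

lemma notMem_edgeBdry_of_mem_edgesWithin {e : Sym2 V} (he : e ∈ edgesWithin A) :
    e ∉ edgeBdry G A := by
  rintro ⟨u, v, -, rfl, -, hv⟩
  exact hv (he v (Sym2.mem_mk_right u v))

lemma edgeBdry_subset_edgeSet (A : Set V) : edgeBdry G A ⊆ G.edgeSet := by
  rintro _ ⟨u, v, hadj, rfl, -, -⟩
  exact hadj

lemma edgesWithin_subset_image :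
    edgesWithin A ⊆ (fun p : V × V => s(p.1, p.2)) '' (A ×ˢ A) := by
  intro e he
  induction e using Sym2.ind with
  | _ a b =>
    exact ⟨(a, b), ⟨he a (Sym2.mem_mk_left a b), he b (Sym2.mem_mk_right a b)⟩, rfl⟩

lemma finite_innerEdges (hA : A.Finite) : (innerEdges G A).Finite :=
  ((hA.prod hA).image _).subset (inter_subset_right.trans edgesWithin_subset_image)

end Clusters

section LocallyFinite

variable (hlf : LocFin G)
include hlf

lemma LocFin.finite_setOf_walk_length_le (v : V) (n : ℕ) :
    {u | ∃ w : G.Walk u v, w.length ≤ n}.Finite := by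
  induction n with
  | zero =>
    refine (finite_singleton v).subset ?_
    rintro u ⟨w, hw⟩
    cases w with
    | nil => rfl
    | cons => simp at hw
  | succ n ih =>
    refine ((ih.biUnion fun x _ => hlf x).insert v).subset ?_
    rintro u ⟨w, hw⟩
    cases w with
    | nil => exact mem_insert v _
    | @cons _ x _ h w' =>
      exact mem_insert_of_mem v (mem_biUnion ⟨w', by simpa using hw⟩ h.symm)

lemma LocFin.countable_reachable {S : Set V} (hS : S.Countable) :
    {v | ∃ u ∈ S, G.Reachable u v}.Countable := by
  refine (hS.biUnion fun u _ =>
    countable_iUnion fun n => (hlf.finite_setOf_walk_length_le u n).countable).mono ?_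
  rintro v ⟨u, hu, ⟨w⟩⟩
  exact mem_biUnion hu (mem_iUnion.2 ⟨w.length, w.reverse, by simp⟩)

lemma LocFin.countable_walk (u v : V) : Countable (G.Walk u v) := by
  classical
  let : G.LocallyFinite := fun x => (hlf x).fintype
  rw [← countable_univ_iff]
  refine (countable_iUnion fun n => (toFinite {p : G.Walk u v | p.length = n}).countable).mono ?_
  exact fun p _ => mem_iUnion.2 ⟨p.length, rfl⟩

lemma LocFin.finite_edgeBdry {A : Set V} (hA : A.Finite) : (edgeBdry G A).Finite := by
  refine (hA.biUnion fun u _ => (hlf u).image fun w => s(u, w)).subset ?_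
  rintro _ ⟨u, v, hadj, rfl, hu, -⟩
  exact mem_biUnion hu ⟨v, hadj, rfl⟩

end LocallyFinite

section Configurations

lemma IsBernoulli.measure_cylinder_inter_closed {E : Type*} {p : ℝ} {ν : Measure (E → Bool)}
    (hν : IsBernoulli p ν) (σ : E → Bool) {J K : Finset E} (hJK : Disjoint J K) :
    ν ({ω | ∀ e ∈ J, ω e = σ e} ∩ {ω | ∀ e ∈ K, ω e = false}) =
      ν {ω | ∀ e ∈ J, ω e = σ e} * ENNReal.ofReal (1 - p) ^ K.card := by
  classical
  set σ' : E → Bool := fun e => if e ∈ J then σ e else false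
  have hσ'K : ∀ e ∈ K, σ' e = false := fun e he => if_neg (Finset.disjoint_right.1 hJK he)
  have hcyl : {ω : E → Bool | ∀ e ∈ J, ω e = σ e} ∩ {ω | ∀ e ∈ K, ω e = false} =
      {ω | ∀ e ∈ J ∪ K, ω e = σ' e} := by
    ext ω
    simp only [mem_inter_iff, mem_ofPred_eq, Finset.mem_union, or_imp, forall_and]
    refine and_congr (forall₂_congr fun e he => by simp [σ', he]) ?_
    exact forall₂_congr fun e he => by rw [hσ'K e he]
  rw [hcyl, hν.2, hν.2, Finset.prod_union hJK]
  congr 1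
  · exact Finset.prod_congr rfl fun e he => by simp only [σ', if_pos he]
  · exact Finset.prod_eq_pow_card fun e he => by simp [hσ'K e he]

variable {E : Set (Sym2 V)}

lemma mem_openOf_iff {ω : E → Bool} {e : Sym2 V} (he : e ∈ E) :
    e ∈ openOf ω ↔ ω ⟨e, he⟩ = true :=
  ⟨fun ⟨_, h⟩ => h, fun h => ⟨he, h⟩⟩

lemma measurable_mem_openOf (b : Sym2 V) : Measurable fun ω : E → Bool => b ∈ openOf ω := by
  simp only [openOf, mem_ofPred_eq]
  fun_prop

lemma IsBernoulli.measure_agree_inter_closed {p : ℝ} {ν : Measure (E → Bool)}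
    (hν : IsBernoulli p ν) (σ : Set (Sym2 V)) {X : Set (Sym2 V)} {T : Finset (Sym2 V)}
    (hX : X.Finite) (hXE : X ⊆ E) (hTE : ↑T ⊆ E) (hXT : Disjoint X ↑T) :
    ν ({ζ | ∀ e ∈ X, e ∈ openOf ζ ↔ e ∈ σ} ∩ {ζ | ∀ e ∈ T, e ∉ openOf ζ}) =
      ν {ζ | ∀ e ∈ X, e ∈ openOf ζ ↔ e ∈ σ} * ENNReal.ofReal (1 - p) ^ T.card := by
  classical
  set J : Finset E := hX.toFinset.subtype (· ∈ E)
  set K : Finset E := T.subtype (· ∈ E)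
  have hagree : {ζ : E → Bool | ∀ e ∈ X, e ∈ openOf ζ ↔ e ∈ σ} =
      {ζ | ∀ e ∈ J, ζ e = decide (↑e ∈ σ)} := by
    ext ζ
    simp only [mem_ofPred_eq, J, Finset.mem_subtype, Finite.mem_toFinset, Subtype.forall]
    refine ⟨fun h e _ he => ?_, fun h e he => ?_⟩
    · rw [Bool.eq_iff_iff, ← mem_openOf_iff, decide_eq_true_iff]
      exact h e he
    · have := h e (hXE he) he
      rwa [Bool.eq_iff_iff, ← mem_openOf_iff, decide_eq_true_iff] at this
  have hclosed :
      {ζ : E → Bool | ∀ e ∈ T, e ∉ openOf ζ} = {ζ | ∀ e ∈ K, ζ e = false} := by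
    ext ζ
    simp only [mem_ofPred_eq, K, Finset.mem_subtype, Subtype.forall]
    refine ⟨fun h e hE he => ?_, fun h e he => ?_⟩
    · simpa [mem_openOf_iff hE] using h e he
    · simpa [mem_openOf_iff (hTE he)] using h e (hTE he) he
  have hK : K.card = T.card := by
    rw [Finset.card_subtype, Finset.filter_true_of_mem fun e he => hTE he]
  have hJK : Disjoint J K := Finset.disjoint_left.2 fun e heJ heK =>
    hXT.ne_of_mem (by simpa [J] using heJ) (by simpa [K] using heK) rfl
  rw [hagree, hclosed, hν.measure_cylinder_inter_closed _ hJK, hK]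

end Configurations

section GraphEvents

variable (G) in
def TouchesInfinite (F : Set (Sym2 V)) (e : Sym2 V) : Prop :=
  ∃ v ∈ e, (cluster G F {v}).Infinite

variable (hlf : LocFin G)
include hlf

lemma LocFin.measurableSet_setOf_reachable (u v : V) :
    MeasurableSet {ω : G.edgeSet → Bool | (openGraph G (openOf ω)).Reachable u v} := by
  have := hlf.countable_walk u v
  have key : {ω : G.edgeSet → Bool | (openGraph G (openOf ω)).Reachable u v} =
      ⋃ w : G.Walk u v, {ω | ∀ e ∈ w.edges, e ∈ openOf ω} := by
    ext ω
    simp only [mem_ofPred_eq, mem_iUnion]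
    constructor
    · rintro ⟨p⟩
      refine ⟨p.mapLe (openGraph_le _), fun e he => ?_⟩
      rw [SimpleGraph.Walk.edges_mapLe_eq_edges] at he
      exact ((edgeSet_openGraph _).subset (p.edges_subset_edgeSet he)).2
    · rintro ⟨w, hw⟩
      exact ⟨w.transfer _ fun e he => (edgeSet_openGraph _).superset
        ⟨w.edges_subset_edgeSet he, hw e he⟩⟩
  rw [key]
  exact .iUnion fun w => (measurable_forall_mem w.edges.finite_toSet.countable
    fun e _ => measurable_mem_openOf e).setOf

lemma LocFin.measurable_cluster_infinite (v : V) :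
    Measurable fun ω : G.edgeSet → Bool => (cluster G (openOf ω) {v}).Infinite := by
  refine measurableSet_setOfPred.1 (measurableSet_setOf_infinite
    (hlf.countable_reachable (countable_singleton v)) (fun _ => cluster_subset_reachable) ?_)
  simpa [cluster] using hlf.measurableSet_setOf_reachable v

lemma LocFin.measurable_touchesInfinite (e : Sym2 V) :
    Measurable fun ω : G.edgeSet → Bool => TouchesInfinite G (openOf ω) e := by
  induction e using Sym2.ind with
  | _ a b =>
    simp only [TouchesInfinite, Sym2.mem_iff, exists_eq_or_imp, exists_eq_left]
    exact (hlf.measurable_cluster_infinite a).or (hlf.measurable_cluster_infinite b)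

end GraphEvents

/-- A witness records the `(ω ∪ ζ)`-cluster `A` of `S`, the set `F` of its boundary edges that
touch an infinite `ω`-cluster, and the sets `σ`, `τ` of `ω`- and `ζ`-open edges inside `A`. -/
@[ext]
structure Witness (G : SimpleGraph V) (S : Set V) (t : ℕ) where
  A : Finset V
  F : Finset (Sym2 V)
  σ : Finset (Sym2 V)
  τ : Finset (Sym2 V)
  subset_A : S ⊆ A
  F_subset : ↑F ⊆ edgeBdry G A
  le_card_F : t ≤ F.card
  σ_subset : ↑σ ⊆ innerEdges G A
  τ_subset : ↑τ ⊆ innerEdges G A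
  A_subset : ↑A ⊆ cluster G (↑σ ∪ ↑τ) S

namespace Witness

variable {S : Set V} {t : ℕ} (i : Witness G S t)

/-- The `t` edges of `F` that the `ζ`-event requires to be closed. -/
def T : Finset (Sym2 V) := (Finset.exists_subset_card_eq i.le_card_F).choose

lemma T_subset_F : i.T ⊆ i.F := (Finset.exists_subset_card_eq i.le_card_F).choose_spec.1

lemma card_T : i.T.card = t := (Finset.exists_subset_card_eq i.le_card_F).choose_spec.2

lemma T_subset_edgeBdry : ↑i.T ⊆ edgeBdry G i.A :=
  (Finset.coe_subset.2 i.T_subset_F).trans i.F_subset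

def omegaEvent : Set (G.edgeSet → Bool) :=
  {ω | (∀ e ∈ innerEdges G i.A, e ∈ openOf ω ↔ e ∈ i.σ) ∧
    (∀ e ∈ edgeBdry G i.A, e ∉ openOf ω) ∧
    (∀ e ∈ edgeBdry G i.A, TouchesInfinite G (openOf ω) e ↔ e ∈ i.F) ∧
    ∀ v ∈ i.A, (cluster G (openOf ω) {v}).Finite}

def zetaEvent : Set (G.edgeSet → Bool) :=
  {ζ | ∀ e ∈ (innerEdges G i.A ∪ edgeBdry G i.A) \ i.T, e ∈ openOf ζ ↔ e ∈ i.τ}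

def zetaEventClosed : Set (G.edgeSet → Bool) :=
  i.zetaEvent ∩ {ζ | ∀ e ∈ i.T, e ∉ openOf ζ}

variable {i} {j : Witness G S t} {ω ζ : G.edgeSet → Bool}

lemma A_subset_of_mem (hωi : ω ∈ i.omegaEvent) (hζi : ζ ∈ i.zetaEvent)
    (hωj : ω ∈ j.omegaEvent) (hζj : ζ ∈ j.zetaEvent) : (j.A : Set V) ⊆ i.A := by
  obtain ⟨-, hclosed_i, htouch_i, hfin_i⟩ := hωi
  obtain ⟨hσ_j, -, -, hfin_j⟩ := hωj
  intro x hx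
  by_contra hxi
  obtain ⟨u, hu, ⟨w⟩⟩ := j.A_subset hx
  obtain ⟨d, -, hd₁, hd₂⟩ := w.exists_boundary_dart _ (i.subset_A hu) hxi
  obtain ⟨hGd, hd⟩ := d.adj
  have hbdry : s(d.fst, d.snd) ∈ edgeBdry G i.A := ⟨_, _, hGd, rfl, hd₁, hd₂⟩
  have hinner : s(d.fst, d.snd) ∈ innerEdges G j.A :=
    (union_subset j.σ_subset j.τ_subset) hd
  -- the crossing edge is `ω`-closed, so it is `ζ`-open, so it lies in `i.T ⊆ i.F`
  have hζ : s(d.fst, d.snd) ∈ openOf ζ := by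
    rcases hd with hσ | hτ
    · exact absurd ((hσ_j _ hinner).2 hσ) (hclosed_i _ hbdry)
    · refine (hζj _ ⟨Or.inl hinner, fun hT => ?_⟩).2 hτ
      exact notMem_edgeBdry_of_mem_edgesWithin hinner.2 (j.T_subset_edgeBdry hT)
  have hT : s(d.fst, d.snd) ∈ i.T := by
    by_contra hT
    exact notMem_edgeBdry_of_mem_edgesWithin (i.τ_subset ((hζi _ ⟨Or.inr hbdry, hT⟩).1 hζ)).2
      hbdry
  obtain ⟨v, hv, hinf⟩ := (htouch_i _ hbdry).2 (i.T_subset_F hT)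
  rcases Sym2.mem_iff.1 hv with rfl | rfl
  · exact hinf (hfin_i _ hd₁)
  · exact hinf (hfin_j _ (hinner.2 _ (Sym2.mem_mk_right _ _)))

lemma eq_of_mem (hωi : ω ∈ i.omegaEvent) (hζi : ζ ∈ i.zetaEvent)
    (hωj : ω ∈ j.omegaEvent) (hζj : ζ ∈ j.zetaEvent) : i = j := by
  have hA : i.A = j.A := Finset.coe_injective
    ((A_subset_of_mem hωj hζj hωi hζi).antisymm (A_subset_of_mem hωi hζi hωj hζj))
  have agree {X Y : Finset (Sym2 V)} {D : Set (Sym2 V)} (hX : ↑X ⊆ D) (hY : ↑Y ⊆ D)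
      (h : ∀ e ∈ D, e ∈ X ↔ e ∈ Y) : X = Y :=
    Finset.ext fun e => ⟨fun he => (h e (hX he)).1 he, fun he => (h e (hY he)).2 he⟩
  have hζ (k : Witness G S t) (hζk : ζ ∈ k.zetaEvent) (e) (he : e ∈ innerEdges G k.A) :
      e ∈ openOf ζ ↔ e ∈ k.τ :=
    hζk e ⟨Or.inl he, fun hT =>
      notMem_edgeBdry_of_mem_edgesWithin he.2 (k.T_subset_edgeBdry hT)⟩
  have hτ_i := hζ i hζi
  have hτ_j := hζ j hζj
  obtain ⟨hσ_i, -, htouch_i, -⟩ := hωi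
  obtain ⟨hσ_j, -, htouch_j, -⟩ := hωj
  cases i with | mk A F σ τ _ hF _ hσ hτ _ =>
  cases j with | mk A' F' σ' τ' _ hF' _ hσ' hτ' _ =>
  obtain rfl : A = A' := hA
  exact Witness.ext rfl
    (agree hF hF' fun e he => (htouch_i e he).symm.trans (htouch_j e he))
    (agree hσ hσ' fun e he => (hσ_i e he).symm.trans (hσ_j e he))
    (agree hτ hτ' fun e he => (hτ_i e he).symm.trans (hτ_j e he))

lemma exists_mem (hlf : LocFin G)
    (hfin : (cluster G (openOf ω ∪ openOf ζ) S).Finite)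
    (hcard : t ≤ {e ∈ edgeBdry G (cluster G (openOf ω ∪ openOf ζ) S) |
      TouchesInfinite G (openOf ω) e}.ncard) :
    ∃ i : Witness G S t, ω ∈ i.omegaEvent ∧ ζ ∈ i.zetaEventClosed := by
  set C := cluster G (openOf ω ∪ openOf ζ) S
  have hFfin : {e ∈ edgeBdry G C | TouchesInfinite G (openOf ω) e}.Finite :=
    (hlf.finite_edgeBdry hfin).subset (sep_subset _ _)
  have hσfin : (openOf ω ∩ innerEdges G C).Finite :=
    (finite_innerEdges hfin).subset inter_subset_right
  have hτfin : (openOf ζ ∩ innerEdges G C).Finite :=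
    (finite_innerEdges hfin).subset inter_subset_right
  have hclosed (e) (he : e ∈ edgeBdry G C) : e ∉ openOf ω ∪ openOf ζ :=
    notMem_of_mem_edgeBdry_cluster he
  let i : Witness G S t :=
    { A := hfin.toFinset
      F := hFfin.toFinset
      σ := hσfin.toFinset
      τ := hτfin.toFinset
      subset_A := by simpa using subset_cluster
      F_subset := by simp
      le_card_F := by rwa [← ncard_coe_finset, hFfin.coe_toFinset]
      σ_subset := by simp
      τ_subset := by simp
      A_subset := by
        simp only [Finite.coe_toFinset, ← union_inter_distrib_right]
        exact cluster_subset_cluster_inter_innerEdges }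
  have hA : (i.A : Set V) = C := hfin.coe_toFinset
  refine ⟨i, ⟨fun e he => ?_, fun e he hω => ?_, fun e he => ?_, fun v hv => ?_⟩,
    fun e ⟨he, _⟩ => ?_, fun e hT hζ => ?_⟩
  · simp_all [i]
  · exact hclosed e (hA ▸ he) (.inl hω)
  · simp_all [i]
  · exact hfin.subset ((cluster_mono subset_union_left _).trans
      (cluster_singleton_subset (by simpa [i] using hv)))
  · rw [hA] at he
    rcases he with hin | hbd
    · simp [i, hin]
    · refine iff_of_false (fun h => hclosed e hbd (.inr h)) fun h => ?_
      exact notMem_edgeBdry_of_mem_edgesWithin (i.τ_subset h).2 (hA ▸ hbd)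
  · exact hclosed e (hA ▸ i.T_subset_edgeBdry hT) (.inr hζ)

lemma measurableSet_omegaEvent (hlf : LocFin G) (i : Witness G S t) :
    MeasurableSet i.omegaEvent := by
  have hA := i.A.finite_toSet
  have hbdry := (hlf.finite_edgeBdry hA).countable
  refine measurableSet_setOfPred.2 <|
    (measurable_forall_mem (finite_innerEdges hA).countable fun e _ =>
      (measurable_mem_openOf e).iff measurable_const).and <|
    (measurable_forall_mem hbdry fun e _ => (measurable_mem_openOf e).not).and <|
    (measurable_forall_mem hbdry fun e _ =>
      (hlf.measurable_touchesInfinite e).iff measurable_const).and <|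
    measurable_forall_mem hA.countable fun v _ => ?_
  simpa only [not_infinite] using (hlf.measurable_cluster_infinite v).not

lemma finite_innerEdges_union_edgeBdry (hlf : LocFin G) (i : Witness G S t) :
    (innerEdges G i.A ∪ edgeBdry G i.A).Finite :=
  (finite_innerEdges i.A.finite_toSet).union (hlf.finite_edgeBdry i.A.finite_toSet)

lemma measurableSet_zetaEvent (hlf : LocFin G) (i : Witness G S t) :
    MeasurableSet i.zetaEvent :=
  measurableSet_setOfPred.2 <|
    measurable_forall_mem ((i.finite_innerEdges_union_edgeBdry hlf).sdiff).countable fun e _ =>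
      (measurable_mem_openOf e).iff measurable_const

lemma measure_zetaEventClosed (hlf : LocFin G) {ε : ℝ} {ν : Measure (G.edgeSet → Bool)}
    (hν : IsBernoulli ε ν) (i : Witness G S t) :
    ν i.zetaEventClosed = ν i.zetaEvent * ENNReal.ofReal (1 - ε) ^ t := by
  have := hν.measure_agree_inter_closed i.τ (i.finite_innerEdges_union_edgeBdry hlf).sdiff
    (sdiff_subset.trans (union_subset inter_subset_left (edgeBdry_subset_edgeSet _)))
    (i.T_subset_edgeBdry.trans (edgeBdry_subset_edgeSet _)) disjoint_sdiff_left
  rwa [i.card_T] at this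

end Witness

lemma LocFin.countable_witness (hlf : LocFin G) {S : Set V} (hS : S.Countable) (t : ℕ) :
    Countable (Witness G S t) := by
  set R := {v | ∃ u ∈ S, G.Reachable u v}
  have hR := hlf.countable_reachable hS
  have hE : (edgesWithin R).Countable := ((hR.prod hR).image _).mono edgesWithin_subset_image
  have hA (i : Witness G S t) : ↑i.A ⊆ R := i.A_subset.trans cluster_subset_reachable
  have hinner (i : Witness G S t) : innerEdges G i.A ⊆ edgesWithin R :=
    fun e he v hv => hA i (he.2 v hv)
  have hF (i : Witness G S t) : ↑i.F ⊆ edgesWithin R := by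
    intro e he
    obtain ⟨u, v, hadj, rfl, hu, -⟩ := i.F_subset he
    obtain ⟨w, hw, hwu⟩ := hA i hu
    intro x hx
    rcases Sym2.mem_iff.1 hx with rfl | rfl
    · exact ⟨w, hw, hwu⟩
    · exact ⟨w, hw, hwu.trans hadj.reachable⟩
  rw [← countable_univ_iff]
  refine countable_of_injective_of_countable_image
    (f := fun i : Witness G S t => (i.A, i.F, i.σ, i.τ)) (fun i _ j _ h => ?_) ?_
  · simp only [Prod.mk.injEq] at h
    exact Witness.ext h.1 h.2.1 h.2.2.1 h.2.2.2
  · refine ((countable_setOf_finset_subset hR).prod ((countable_setOf_finset_subset hE).prod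
      ((countable_setOf_finset_subset hE).prod (countable_setOf_finset_subset hE)))).mono ?_
    rintro _ ⟨i, -, rfl⟩
    exact ⟨hA i, hF i, i.σ_subset.trans (hinner i), i.τ_subset.trans (hinner i)⟩

end Perco

open Perco in
theorem statement_4_general {V : Type*} (G : SimpleGraph V) (hlf : LocFin G)
    (q ε : ℝ) (hε : ε ∈ Set.Ioo (0 : ℝ) 1)
    (S : Finset V) (t : ℕ)
    (μ ν : MeasureTheory.Measure (↥G.edgeSet → Bool))
    (hμ : IsBernoulli q μ) (hν : IsBernoulli ε ν) :
    μ.prod ν {ωζ | (cluster G (openOf ωζ.1 ∪ openOf ωζ.2) ↑S).Finite ∧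
        t ≤ {e ∈ edgeBdry G (cluster G (openOf ωζ.1 ∪ openOf ωζ.2) ↑S) |
              ∃ v : V, v ∈ e ∧ (cluster G (openOf ωζ.1) {v}).Infinite}.ncard}
      ≤ ENNReal.ofReal ((1 - ε) ^ t) := by
  have := hμ.1
  have := hν.1
  have := hlf.countable_witness S.countable_toSet t
  let P (i : Witness G S t) := i.omegaEvent ×ˢ i.zetaEvent
  have hdisj : Pairwise (Function.onFun Disjoint P) := fun i j hij => disjoint_left.2
    fun ⟨_, _⟩ ⟨hωi, hζi⟩ ⟨hωj, hζj⟩ => hij (Witness.eq_of_mem hωi hζi hωj hζj)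
  calc _ ≤ μ.prod ν (⋃ i : Witness G S t, i.omegaEvent ×ˢ i.zetaEventClosed) :=
        measure_mono fun ⟨_, _⟩ ⟨hfin, hcard⟩ =>
          let ⟨i, hω, hζ⟩ := Witness.exists_mem hlf hfin hcard
          mem_iUnion.2 ⟨i, hω, hζ⟩
    _ ≤ ∑' i : Witness G S t, μ.prod ν (i.omegaEvent ×ˢ i.zetaEventClosed) :=
        measure_iUnion_le _
    _ = ∑' i, μ.prod ν (P i) * ENNReal.ofReal (1 - ε) ^ t := by
        simp only [P, Measure.prod_prod, Witness.measure_zetaEventClosed hlf hν, mul_assoc]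
    _ = μ.prod ν (⋃ i, P i) * ENNReal.ofReal (1 - ε) ^ t := by
        rw [ENNReal.tsum_mul_right, measure_iUnion hdisj fun i =>
          (i.measurableSet_omegaEvent hlf).prod (i.measurableSet_zetaEvent hlf)]
    _ ≤ 1 * ENNReal.ofReal (1 - ε) ^ t := by gcongr; exact prob_le_one
    _ = ENNReal.ofReal ((1 - ε) ^ t) := by rw [one_mul, ENNReal.ofReal_pow (by linarith [hε.2])]

open Perco in
/-- Sprinkling bound: for independent `ω ~ P_q` and `ζ ~ P_ε`, the probability
that the `(ω ∪ ζ)`-cluster of `S` is finite while at least `t` of its boundary edges touch an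
infinite `ω`-cluster is at most `(1-ε)^t`. -/
theorem statement_4 {V : Type*} (G : SimpleGraph V) [Infinite V] (hlf : LocFin G)
    (q ε : ℝ) (hq : q ∈ Set.Icc (0 : ℝ) 1) (hε : ε ∈ Set.Ioo (0 : ℝ) 1)
    (S : Finset V) (t : ℕ) (ht : 1 ≤ t)
    (μ ν : MeasureTheory.Measure (↥G.edgeSet → Bool))
    (hμ : IsBernoulli q μ) (hν : IsBernoulli ε ν) :
    μ.prod ν {ωζ | (cluster G (openOf ωζ.1 ∪ openOf ωζ.2) ↑S).Finite ∧
        t ≤ {e ∈ edgeBdry G (cluster G (openOf ωζ.1 ∪ openOf ωζ.2) ↑S) |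
              ∃ v : V, v ∈ e ∧ (cluster G (openOf ωζ.1) {v}).Infinite}.ncard}
      ≤ ENNReal.ofReal ((1 - ε) ^ t) :=
  statement_4_general G hlf q ε hε S t μ ν hμ hν
end
end

section
/- Let G be an infinite graph with all vertex degrees at most d, and suppose there exists ε > 0 such that Φ(n) ≥ ε·n^{1/2} for all n ≥ 1. Then there exists δ > 0 such that for every finite set of vertices A whose induced subgraph G[A] is connected, |∂A| ≥ δ·diam(A), where diam(A) is the maximum graph distance in G between two vertices of A. -/
/-!
Let `u, v ∈ A` realise the diameter `D` and split `A` into the distance layers `L₁, …, L_{D+1}`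
around `u`; all of them are nonempty because `G[A]` is connected. An edge leaving a window
`U = L_i ∪ … ∪ L_{j-1}` of consecutive layers either lies in `∂A` or ends in `L_{i-1}` or `L_j`,
so the isoperimetric inequality gives `ε √|U| ≤ (edges of ∂A at U) + d (|L_{i-1}| + |L_j|)`.
Cut `[1, D+1]` greedily into windows: either some initial window pays for its length plus the cost
of cutting after it, or no cut is affordable; then the layer sizes grow so fast that `|U|` is
quadratic in the length of the window, and the whole remaining window pays for its length.
Either way `|∂A| ≥ ε² / (64 (d + ε)) · D`.
-/

open MeasureTheory Set

noncomputable section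

open Finset

namespace Perco

section WindowSums

variable {ε c : ℝ} {s b : ℕ → ℝ}

lemma sq_le_sum_Ico_of_forall_lt (hε : 0 < ε) (hεc : ε ≤ c) (hs0 : ∀ l, 0 ≤ s l)
    {i j : ℕ} (hij : i ≤ j) (hs1 : ∀ l ∈ Finset.Ico i j, 1 ≤ s l)
    (hcut : ∀ k, i < k → k < j →
      ε * √(∑ l ∈ Finset.Ico i k, s l) < ε ^ 2 / (64 * c) * ((k : ℝ) - i) + c * (s (k - 1) + s k)) :
    (ε / (16 * c) * ((j : ℝ) - i)) ^ 2 ≤ ∑ l ∈ Finset.Ico i j, s l := by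
  have hc : 0 < c := hε.trans_le hεc
  set α := ε / (16 * c) with hα
  set δ := ε ^ 2 / (64 * c) with hδ
  have hα0 : 0 ≤ α := by positivity
  have hα1 : α ≤ 1 / 16 := by rw [hα, div_le_iff₀ (by positivity)]; linarith
  have hεα : ε * α = 4 * δ := by rw [hα, hδ]; field_simp; ring
  have hαδ : 4 * α ^ 2 * c = δ := by rw [hα, hδ]; field_simp; ring
  induction j using Nat.strong_induction_on with
  | _ j ih =>
  have hlen : (j : ℝ) - i ≤ ∑ l ∈ Finset.Ico i j, s l := by
    calc (j : ℝ) - i = ∑ _l ∈ Finset.Ico i j, (1 : ℝ) := by simp [Nat.cast_sub hij]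
      _ ≤ _ := sum_le_sum hs1
  by_cases hj : j ≤ i + 2
  · have hL0 : (0 : ℝ) ≤ j - i := sub_nonneg.mpr (by exact_mod_cast hij)
    have hL2 : (j : ℝ) - i ≤ 2 := by
      rw [sub_le_iff_le_add']
      exact_mod_cast hj
    have hα2 : α ^ 2 ≤ 1 / 256 := by nlinarith
    calc (α * ((j : ℝ) - i)) ^ 2 = α ^ 2 * (((j : ℝ) - i) * ((j : ℝ) - i)) := by ring
      _ ≤ 1 / 256 * (2 * ((j : ℝ) - i)) := by gcongr
      _ ≤ _ := by linarith
  obtain ⟨k, rfl⟩ : ∃ k, j = k + 2 := ⟨j - 2, by omega⟩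
  have hSk := ih k (by omega) (by omega) (fun l hl => hs1 l (Ico_subset_Ico_right (by omega) hl))
    (fun k' h1 h2 => hcut k' h1 (by omega))
  have hfail := hcut (k + 1) (by omega) (by omega)
  rw [sum_Ico_succ_top (by omega)] at hfail
  rw [sum_Ico_succ_top (by omega), sum_Ico_succ_top (by omega)]
  push_cast at hfail ⊢
  set m : ℝ := (k : ℝ) - i
  have hm : 1 ≤ m := by
    have : (i : ℝ) + 1 ≤ k := by exact_mod_cast (show i + 1 ≤ k by omega)
    linarith
  have hsqrt : α * m ≤ √(∑ l ∈ Finset.Ico i k, s l + s k) :=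
    Real.le_sqrt_of_sq_le (by linarith [hs0 k])
  have hεsqrt : 4 * δ * m ≤ ε * √(∑ l ∈ Finset.Ico i k, s l + s k) := by
    rw [← hεα, mul_assoc]; exact mul_le_mul_of_nonneg_left hsqrt hε.le
  rw [show (k : ℝ) + 1 - i = m + 1 by ring] at hfail
  have hδ0 : 0 ≤ δ := by positivity
  have hcost : δ * (m + 1) ≤ c * (s k + s (k + 1)) := by nlinarith
  have hpair : 4 * α ^ 2 * (m + 1) ≤ s k + s (k + 1) := by
    rw [← hαδ] at hcost; nlinarith
  nlinarith

lemma mul_sub_le_sum_Ico_add {N : ℕ} (hε : 0 < ε) (hεc : ε ≤ c) (hs0 : ∀ l, 0 ≤ s l)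
    (hs1 : ∀ l, 1 ≤ l → l ≤ N → 1 ≤ s l) (hsN : s (N + 1) = 0)
    (hwin : ∀ i j, 1 ≤ i → i < j → j ≤ N + 1 →
      ε * √(∑ l ∈ Finset.Ico i j, s l) ≤ ∑ l ∈ Finset.Ico i j, b l + c * (s (i - 1) + s j))
    {i : ℕ} (hi1 : 1 ≤ i) (hiN : i ≤ N + 1) :
    ε ^ 2 / (64 * c) * ((N : ℝ) + 1 - i) ≤ ∑ l ∈ Finset.Ico i (N + 1), b l + c * s (i - 1) := by
  have hc : 0 < c := hε.trans_le hεc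
  set δ := ε ^ 2 / (64 * c) with hδ
  have hδ0 : 0 ≤ δ := by positivity
  induction i using Nat.strong_decreasing_induction with
  | base => exact ⟨N + 1, fun m hm h1 h2 => absurd h2 (by omega)⟩
  | step i ih =>
  rcases hiN.eq_or_lt with rfl | hiN
  · simp only [Nat.cast_add, Nat.cast_one, sub_self, mul_zero, Ico_self, sum_empty, zero_add]
    exact mul_nonneg hc.le (hs0 _)
  by_cases hgood : ∃ j, i < j ∧ j ≤ N ∧
      δ * ((j : ℝ) - i) + c * (s (j - 1) + s j) ≤ ε * √(∑ l ∈ Finset.Ico i j, s l)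
  · obtain ⟨j, hij, hjN, hcut⟩ := hgood
    have hleft := hwin i j hi1 hij (by omega)
    have hright := ih j hij (by omega) (by omega)
    rw [← sum_Ico_consecutive b hij.le (by omega : j ≤ N + 1)]
    linarith
  · push Not at hgood
    have hgrowth := sq_le_sum_Ico_of_forall_lt hε hεc hs0 hiN.le
      (fun l hl => hs1 l (by simp at hl; omega) (by simp at hl; omega))
      (fun k hik hkN => hgood k hik (by omega))
    have hwhole := hwin i (N + 1) hi1 hiN le_rfl
    rw [hsN, add_zero] at hwhole
    have hL : (0 : ℝ) ≤ (N : ℝ) + 1 - i := by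
      have : (i : ℝ) ≤ N + 1 := by exact_mod_cast hiN.le
      linarith
    have hsqrt := Real.le_sqrt_of_sq_le hgrowth
    push_cast at hsqrt
    have hεα : ε * (ε / (16 * c)) = 4 * δ := by rw [hδ]; field_simp; ring
    have : 4 * δ * ((N : ℝ) + 1 - i) ≤ ε * √(∑ l ∈ Finset.Ico i (N + 1), s l) := by
      rw [← hεα, mul_assoc]; exact mul_le_mul_of_nonneg_left hsqrt hε.le
    nlinarith

lemma mul_le_sum_Ico_of_window {N : ℕ} (hε : 0 < ε) (hεc : ε ≤ c) (hs0 : ∀ l, 0 ≤ s l)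
    (hs1 : ∀ l, 1 ≤ l → l ≤ N → 1 ≤ s l) (hzero : s 0 = 0) (hsN : s (N + 1) = 0)
    (hwin : ∀ i j, 1 ≤ i → i < j → j ≤ N + 1 →
      ε * √(∑ l ∈ Finset.Ico i j, s l) ≤ ∑ l ∈ Finset.Ico i j, b l + c * (s (i - 1) + s j)) :
    ε ^ 2 / (64 * c) * N ≤ ∑ l ∈ Finset.Ico 1 (N + 1), b l := by
  simpa [hzero] using mul_sub_le_sum_Ico_add hε hεc hs0 hs1 hsN hwin le_rfl (by omega)

end WindowSums

variable {V : Type*} {G : SimpleGraph V}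

lemma phi_le_ncard_edgeBdry (S : Finset V) : phi G S.card ≤ (edgeBdry G ↑S).ncard :=
  Nat.sInf_le ⟨S, le_rfl, rfl⟩

lemma edgeBdry_subset_biUnion_incidenceSet (S : Set V) :
    edgeBdry G S ⊆ ⋃ x ∈ S, G.incidenceSet x := by
  rintro _ ⟨x, y, hxy, rfl, hx, -⟩
  exact Set.mem_biUnion hx ⟨hxy, Sym2.mem_mk_left x y⟩

lemma finite_biUnion_incidenceSet (hG : LocFin G) (L : Finset V) :
    (⋃ x ∈ L, G.incidenceSet x).Finite := by
  classical
  refine L.finite_toSet.biUnion fun x _ => ?_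
  have := (hG x).to_subtype
  exact @Set.toFinite _ _ (Finite.of_equiv _ (G.incidenceSetEquivNeighborSet x).symm)

lemma edgeBdry_finite (hG : LocFin G) (S : Finset V) : (edgeBdry G ↑S).Finite :=
  (finite_biUnion_incidenceSet hG S).subset (edgeBdry_subset_biUnion_incidenceSet _)

lemma ncard_biUnion_incidenceSet_le {d : ℕ} (hdeg : ∀ v, (G.neighborSet v).ncard ≤ d)
    (L : Finset V) : (⋃ x ∈ L, G.incidenceSet x).ncard ≤ d * L.card := by
  classical
  calc (⋃ x ∈ L, G.incidenceSet x).ncard ≤ ∑ x ∈ L, (G.incidenceSet x).ncard :=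
        L.set_ncard_biUnion_le _
    _ ≤ ∑ _x ∈ L, d :=
        sum_le_sum fun x _ => (Nat.card_congr (G.incidenceSetEquivNeighborSet x)).trans_le (hdeg x)
    _ = d * L.card := by rw [sum_const, smul_eq_mul, mul_comm]

lemma finite_setOf_dist (A : Finset V) :
    {k | ∃ u ∈ (A : Set V), ∃ v ∈ (A : Set V), G.dist u v = k}.Finite :=
  ((A ×ˢ A).image fun p => G.dist p.1 p.2).finite_toSet.subset
    fun _ ⟨u, hu, v, hv, huv⟩ => mem_image.mpr ⟨(u, v), mem_product.mpr ⟨hu, hv⟩, huv⟩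

lemma dist_le_setDiam {A : Finset V} {u v : V} (hu : u ∈ A) (hv : v ∈ A) :
    G.dist u v ≤ setDiam G A :=
  le_csSup (finite_setOf_dist A).bddAbove ⟨u, hu, v, hv, rfl⟩

lemma exists_dist_eq_setDiam {A : Finset V} (hA : A.Nonempty) :
    ∃ u ∈ A, ∃ v ∈ A, G.dist u v = setDiam G A := by
  obtain ⟨x, hx⟩ := hA
  exact Nat.sSup_mem (s := {k | ∃ u ∈ (A : Set V), ∃ v ∈ (A : Set V), G.dist u v = k})
    ⟨_, x, hx, x, hx, rfl⟩ (finite_setOf_dist A).bddAbove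

section Layers

variable (G) (A : Finset V) (u : V)

/-- The distance layers of `A` around `u`, shifted by one so that layer `0` is empty. -/
def layer (l : ℕ) : Finset V := A.filter fun x => G.dist u x + 1 = l

def layerWindow (i j : ℕ) : Finset V := A.filter fun x => G.dist u x + 1 ∈ Finset.Ico i j

def layerBdry (l : ℕ) : Set (Sym2 V) :=
  {e | ∃ x y, G.Adj x y ∧ e = s(x, y) ∧ x ∈ layer G A u l ∧ y ∉ A}

variable {G A u}

lemma card_layerWindow (i j : ℕ) :
    (layerWindow G A u i j).card = ∑ l ∈ Finset.Ico i j, (layer G A u l).card := by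
  rw [card_eq_sum_card_fiberwise (s := layerWindow G A u i j) (t := Finset.Ico i j)
    (f := fun x => G.dist u x + 1) fun x hx => (mem_filter.mp hx).2]
  refine sum_congr rfl fun l hl => congrArg card ?_
  ext x
  simp only [layerWindow, layer, mem_filter]
  constructor
  · rintro ⟨⟨hx, -⟩, h⟩; exact ⟨hx, h⟩
  · rintro ⟨hx, rfl⟩; exact ⟨⟨hx, hl⟩, rfl⟩

lemma layer_subset_layerWindow {i j l : ℕ} (hl : l ∈ Finset.Ico i j) :
    layer G A u l ⊆ layerWindow G A u i j := by
  intro x hx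
  simp only [layer, layerWindow, mem_filter] at hx ⊢
  exact ⟨hx.1, hx.2 ▸ hl⟩

lemma layerBdry_subset_edgeBdry (l : ℕ) : layerBdry G A u l ⊆ edgeBdry G A := by
  rintro _ ⟨x, y, hxy, rfl, hx, hy⟩
  exact ⟨x, y, hxy, rfl, (mem_filter.mp hx).1, hy⟩

lemma pairwiseDisjoint_layerBdry (t : Set ℕ) : t.PairwiseDisjoint (layerBdry G A u) := by
  intro l _ l' _ hne
  refine Set.disjoint_left.mpr ?_
  rintro _ ⟨x, y, -, rfl, hx, hy⟩ ⟨x', y', -, he, hx', hy'⟩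
  simp only [layer, mem_filter] at hx hx'
  rcases Sym2.eq_iff.mp he with ⟨rfl, -⟩ | ⟨rfl, -⟩
  · exact hne (hx.2.symm.trans hx'.2)
  · exact hy' hx.1

lemma sum_ncard_layerBdry_le (hG : LocFin G) (t : Finset ℕ) :
    ∑ l ∈ t, (layerBdry G A u l).ncard ≤ (edgeBdry G ↑A).ncard := by
  have hfin := edgeBdry_finite hG A
  rw [← finsum_mem_coe_finset, ← Set.Finite.ncard_biUnion t.finite_toSet
    (fun l _ => hfin.subset (layerBdry_subset_edgeBdry l)) (pairwiseDisjoint_layerBdry _)]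
  exact Set.ncard_le_ncard (Set.iUnion₂_subset fun l _ => layerBdry_subset_edgeBdry l) hfin

lemma edgeBdry_layerWindow_subset (i j : ℕ) :
    edgeBdry G (layerWindow G A u i j) ⊆
      ((⋃ l ∈ Finset.Ico i j, layerBdry G A u l) ∪
        ⋃ y ∈ layer G A u (i - 1), G.incidenceSet y) ∪ ⋃ y ∈ layer G A u j, G.incidenceSet y := by
  rintro _ ⟨x, y, hxy, rfl, hx, hy⟩
  simp only [layerWindow, coe_filter, Finset.mem_Ico, Set.mem_ofPred_eq] at hx hy
  by_cases hyA : y ∈ A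
  · have hinc : s(x, y) ∈ G.incidenceSet y := ⟨hxy, Sym2.mem_mk_right x y⟩
    simp only [hyA, true_and, not_and, not_lt] at hy
    have := hxy.diff_dist_adj (u := u)
    rcases Nat.lt_or_ge (G.dist u y + 1) i with hyi | hyi
    · exact Or.inl (Or.inr (Set.mem_biUnion (mem_filter.mpr ⟨hyA, by omega⟩) hinc))
    · exact Or.inr (Set.mem_biUnion (mem_filter.mpr ⟨hyA, by omega⟩) hinc)
  · refine Or.inl (Or.inl (Set.mem_biUnion (x := G.dist u x + 1) (Finset.mem_Ico.mpr hx.2) ?_))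
    exact ⟨x, y, hxy, rfl, mem_filter.mpr ⟨hx.1, rfl⟩, hyA⟩

lemma ncard_edgeBdry_layerWindow_le (hG : LocFin G) {d : ℕ}
    (hdeg : ∀ v, (G.neighborSet v).ncard ≤ d) (i j : ℕ) :
    (edgeBdry G (layerWindow G A u i j)).ncard ≤ ∑ l ∈ Finset.Ico i j, (layerBdry G A u l).ncard +
      d * ((layer G A u (i - 1)).card + (layer G A u j).card) := by
  have hfin := (((edgeBdry_finite hG A).subset
    (Set.iUnion₂_subset fun l (_ : l ∈ Finset.Ico i j) => layerBdry_subset_edgeBdry (u := u) l)).union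
      (finite_biUnion_incidenceSet hG (layer G A u (i - 1)))).union
        (finite_biUnion_incidenceSet hG (layer G A u j))
  have h1 := (Finset.Ico i j).set_ncard_biUnion_le (layerBdry G A u)
  have h2 := ncard_biUnion_incidenceSet_le hdeg (layer G A u (i - 1))
  have h3 := ncard_biUnion_incidenceSet_le hdeg (layer G A u j)
  calc _ ≤ _ := Set.ncard_le_ncard (edgeBdry_layerWindow_subset i j) hfin
    _ ≤ _ := (Set.ncard_union_le _ _).trans (Nat.add_le_add_right (Set.ncard_union_le _ _) _)
    _ ≤ _ := by rw [mul_add]; omega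

lemma mul_sqrt_sum_card_layer_le (hG : LocFin G) {d : ℕ}
    (hdeg : ∀ v, (G.neighborSet v).ncard ≤ d) {ε : ℝ}
    (hiso : ∀ n : ℕ, 1 ≤ n → ε * √n ≤ (phi G n : ℝ)) {i j : ℕ} (hij : i < j)
    (hi : (layer G A u i).Nonempty) :
    ε * √(∑ l ∈ Finset.Ico i j, ((layer G A u l).card : ℝ)) ≤
      ∑ l ∈ Finset.Ico i j, ((layerBdry G A u l).ncard : ℝ) +
        d * (((layer G A u (i - 1)).card : ℝ) + (layer G A u j).card) := by
  have hU : 1 ≤ (layerWindow G A u i j).card :=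
    card_pos.mpr (hi.mono (layer_subset_layerWindow (left_mem_Ico.mpr hij)))
  have hphi := phi_le_ncard_edgeBdry (G := G) (layerWindow G A u i j)
  have hbdry := ncard_edgeBdry_layerWindow_le hG hdeg (A := A) (u := u) i j
  calc _ = ε * √((layerWindow G A u i j).card : ℝ) := by rw [card_layerWindow, Nat.cast_sum]
    _ ≤ _ := hiso _ hU
    _ ≤ _ := by exact_mod_cast hphi.trans hbdry

lemma layer_nonempty (hA : (G.induce (A : Set V)).Connected) (hu : u ∈ A) {v : V} (hv : v ∈ A)
    {l : ℕ} (hl1 : 1 ≤ l) (hlv : l ≤ G.dist u v + 1) : (layer G A u l).Nonempty := by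
  rcases hl1.eq_or_lt with rfl | hl1
  · exact ⟨u, mem_filter.mpr ⟨hu, by simp⟩⟩
  obtain ⟨p⟩ := hA.preconnected ⟨u, hu⟩ ⟨v, hv⟩
  obtain ⟨e, -, he1, he2⟩ :=
    p.exists_boundary_dart {x | G.dist u x + 1 < l} (by simpa) (by simpa using hlv)
  have := (show G.Adj e.fst e.snd from e.adj).diff_dist_adj (u := u)
  simp only [Set.mem_ofPred_eq, not_lt] at he1 he2
  exact ⟨e.snd, mem_filter.mpr ⟨e.snd.2, by omega⟩⟩

lemma layer_eq_empty (hu : u ∈ A) {l : ℕ} (hl : setDiam G A + 1 < l) : layer G A u l = ∅ :=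
  filter_eq_empty_iff.mpr fun x hx => by have := dist_le_setDiam (G := G) hu hx; omega

end Layers

end Perco

open Perco in
theorem statement_8_general {V : Type*} (G : SimpleGraph V) (d : ℕ)
    (hdeg : ∀ v : V, (G.neighborSet v).Finite ∧ (G.neighborSet v).ncard ≤ d)
    (ε : ℝ) (hε : 0 < ε) (hiso : ∀ n : ℕ, 1 ≤ n → ε * Real.sqrt n ≤ (phi G n : ℝ)) :
    ∃ δ : ℝ, 0 < δ ∧ ∀ A : Finset V, (G.induce (↑A : Set V)).Connected →
      δ * (setDiam G ↑A : ℝ) ≤ ((edgeBdry G ↑A).ncard : ℝ) := by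
  have hG : LocFin G := fun v => (hdeg v).1
  refine ⟨ε ^ 2 / (64 * ((d : ℝ) + ε)), by positivity, fun A hA => ?_⟩
  obtain ⟨⟨x, hx⟩⟩ := hA.nonempty
  obtain ⟨u, hu, v, hv, huv⟩ := exists_dist_eq_setDiam (G := G) ⟨x, hx⟩
  have key := mul_le_sum_Ico_of_window (N := setDiam G A + 1) (c := (d : ℝ) + ε)
    (s := fun l => ((layer G A u l).card : ℝ)) (b := fun l => ((layerBdry G A u l).ncard : ℝ))
    hε (le_add_of_nonneg_left d.cast_nonneg) (fun l => by positivity)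
    (fun l hl1 hlN => Nat.one_le_cast.mpr (card_pos.mpr (layer_nonempty hA hu hv hl1 (by omega))))
    (by simp [layer]) (by simp [layer_eq_empty hu (Nat.lt_succ_self _)])
    (fun i j hi hij hjN => (mul_sqrt_sum_card_layer_le hG (fun v => (hdeg v).2) hiso hij
      (layer_nonempty hA hu hv hi (by omega))).trans (by gcongr; linarith))
  calc ε ^ 2 / (64 * ((d : ℝ) + ε)) * (setDiam G A : ℝ)
      ≤ ε ^ 2 / (64 * ((d : ℝ) + ε)) * ((setDiam G A + 1 : ℕ) : ℝ) := by gcongr; simp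
    _ ≤ _ := key
    _ ≤ _ := by exact_mod_cast sum_ncard_layerBdry_le hG _

open Perco in
/-- If an infinite graph with degrees at most `d` satisfies the isoperimetric
inequality `Φ(n) ≥ ε √n`, then there is `δ > 0` such that every finite connected vertex set `A`
satisfies `|∂A| ≥ δ diam(A)`. -/
theorem statement_8 {V : Type*} (G : SimpleGraph V) [Infinite V] (d : ℕ)
    (hdeg : ∀ v : V, (G.neighborSet v).Finite ∧ (G.neighborSet v).ncard ≤ d)
    (ε : ℝ) (hε : 0 < ε) (hiso : ∀ n : ℕ, 1 ≤ n → ε * Real.sqrt n ≤ (phi G n : ℝ)) :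
    ∃ δ : ℝ, 0 < δ ∧ ∀ A : Finset V, (G.induce (↑A : Set V)).Connected →
      δ * (setDiam G ↑A : ℝ) ≤ ((edgeBdry G ↑A).ncard : ℝ) :=
  statement_8_general G d hdeg ε hε hiso
end
end

section
/- Let m be a non-negative integer and let r : {0,…,m} → ℕ be any function. For k ∈ {0,…,m}, set I_k := [k - r(k) - 1/2, k + r(k) + 1/2] ⊆ ℝ. Then there exists a subset L ⊆ {0,…,m} such that the intervals I_k for k ∈ L are pairwise disjoint and Σ_{k ∈ L} (2·r(k) + 1) ≥ m/2. -/
open MeasureTheory Set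

noncomputable section

/-!
Greedy selection from the right. Starting at `t = m`, take, among the intervals covering `t`,
one reaching furthest to the left, and continue from the first integer to the left of it. The
chosen intervals cover `{0, …, m}`, and by the choice of left-most reach, any two of them that are
not consecutive in the chain are disjoint. Sorting the chain alternately into two families gives
two disjoint families whose lengths add up to at least `m + 1`; the larger one does the job.
-/

section IntervalSelection

variable {ι : Type*} (lo hi : ι → ℤ)

-- An integer lies strictly between the intervals, so their `1/2`-neighbourhoods in `ℝ` are disjoint.
def IntervalsSeparated (i j : ι) : Prop := hi i + 1 < lo j ∨ hi j + 1 < lo i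

def totalLength (A : Finset ι) : ℤ := ∑ i ∈ A, (hi i - lo i + 1)

instance : Std.Symm (IntervalsSeparated lo hi) := ⟨fun _ _ h => h.symm⟩

variable {lo hi} [DecidableEq ι] {s : Finset ι} {T : ℤ}

/-- The invariant of the greedy selection after treating the points `t, …, T` (`n` only bounds
the induction): the intervals of `B` end before `t`, so the next chosen interval can be added to
`B` and the roles of `A` and `B` swapped. -/
lemma exists_separated_pair_of_cover
    (hcover : ∀ t, 0 ≤ t → t ≤ T → ∃ i ∈ s, lo i ≤ t ∧ t ≤ hi i) :
    ∀ (n : ℕ) (t : ℤ), t < n → t ≤ T →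
      ∃ A B : Finset ι, A ⊆ s ∧ B ⊆ s ∧
        (A : Set ι).Pairwise (IntervalsSeparated lo hi) ∧
        (B : Set ι).Pairwise (IntervalsSeparated lo hi) ∧
        (∀ i ∈ A ∪ B, lo i ≤ t) ∧ (∀ i ∈ B, hi i < t) ∧
        t + 1 ≤ totalLength lo hi A + totalLength lo hi B := by
  intro n
  induction n with
  | zero =>
    intro t ht _
    exact ⟨∅, ∅, by simp, by simp, by simp, by simp, by simp, by simp,
      by simp only [totalLength, Finset.sum_empty]; omega⟩
  | succ n ih =>
    intro t htn htT
    rcases lt_or_ge t n with htn' | htn'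
    · exact ih t htn' htT
    have hcov : (s.filter fun i => lo i ≤ t ∧ t ≤ hi i).Nonempty := by
      obtain ⟨i, hi, hcov⟩ := hcover t (by omega) htT
      exact ⟨i, Finset.mem_filter.mpr ⟨hi, hcov⟩⟩
    obtain ⟨k, hk, hk_min⟩ := Finset.exists_min_image _ lo hcov
    obtain ⟨hks, hlok, hhik⟩ := Finset.mem_filter.mp hk
    obtain ⟨A, B, hAs, hBs, hA, hB, hlo, hhi, hlen⟩ := ih (lo k - 1) (by omega) (by omega)
    have hkB : k ∉ B := fun h => by have := hhi k h; omega
    refine ⟨insert k B, A, Finset.insert_subset hks hBs, hAs, ?_, hA, ?_, ?_, ?_⟩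
    · rw [Finset.coe_insert, Set.pairwise_insert_of_symm]
      exact ⟨hB, fun j hj _ => Or.inr (by have := hhi j hj; omega)⟩
    · intro i hi
      simp only [Finset.mem_union, Finset.mem_insert] at hi
      rcases hi with (rfl | hi) | hi
      · exact hlok
      all_goals have := hlo i (by simp [hi]); omega
    · intro i hiA
      by_contra! hti
      have hloi := hlo i (Finset.mem_union_left _ hiA)
      have := hk_min i (Finset.mem_filter.mpr ⟨hAs hiA, by omega, hti⟩)
      omega
    · rw [totalLength, Finset.sum_insert hkB, ← totalLength]
      omega

theorem exists_separated_subfamily_of_cover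
    (hcover : ∀ t, 0 ≤ t → t ≤ T → ∃ i ∈ s, lo i ≤ t ∧ t ≤ hi i) :
    ∃ L ⊆ s, (L : Set ι).Pairwise (IntervalsSeparated lo hi) ∧
      T + 1 ≤ 2 * totalLength lo hi L := by
  obtain ⟨A, B, hAs, hBs, hA, hB, -, -, hlen⟩ :=
    exists_separated_pair_of_cover hcover (T.toNat + 1) T (by omega) le_rfl
  rcases le_total (totalLength lo hi B) (totalLength lo hi A) with h | h
  · exact ⟨A, hAs, hA, by omega⟩
  · exact ⟨B, hBs, hB, by omega⟩

end IntervalSelection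

lemma disjoint_Icc_half_of_add_one_lt {a b c d : ℤ} (h : b + 1 < c) :
    Disjoint (Icc ((a : ℝ) - 1/2) ((b : ℝ) + 1/2)) (Icc ((c : ℝ) - 1/2) ((d : ℝ) + 1/2)) := by
  have : (b : ℝ) + 1 < c := by exact_mod_cast h
  exact Set.disjoint_left.mpr fun x ⟨_, hxb⟩ ⟨hxc, _⟩ => by linarith

/-- A Vitali-type covering selection: from the intervals
`I_k = [k - r k - 1/2, k + r k + 1/2]`, `k ∈ {0,…,m}`, one can select a pairwise disjoint
subfamily whose total length is at least `m/2`. -/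
theorem statement_15 (m : ℕ) (r : ℕ → ℕ) :
    ∃ L : Finset ℕ, L ⊆ Finset.range (m + 1) ∧
      (↑L : Set ℕ).Pairwise (fun j k =>
        Disjoint (Set.Icc ((j : ℝ) - r j - 1/2) ((j : ℝ) + r j + 1/2))
          (Set.Icc ((k : ℝ) - r k - 1/2) ((k : ℝ) + r k + 1/2))) ∧
      (m : ℝ) / 2 ≤ ∑ k ∈ L, (2 * (r k : ℝ) + 1) := by
  let lo : ℕ → ℤ := fun k => k - r k
  let hi : ℕ → ℤ := fun k => k + r k
  have hcover : ∀ t : ℤ, 0 ≤ t → t ≤ m → ∃ k ∈ Finset.range (m + 1), lo k ≤ t ∧ t ≤ hi k :=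
    fun t ht htm => ⟨t.toNat, Finset.mem_range.mpr (by omega), by simp [lo]; omega,
      by simp [hi]; omega⟩
  obtain ⟨L, hLs, hL, hlen⟩ := exists_separated_subfamily_of_cover hcover
  refine ⟨L, hLs, hL.mono' fun j k hjk => ?_, ?_⟩
  · have key : ∀ {a b : ℕ}, hi a + 1 < lo b → Disjoint
        (Set.Icc ((a : ℝ) - r a - 1/2) ((a : ℝ) + r a + 1/2))
        (Set.Icc ((b : ℝ) - r b - 1/2) ((b : ℝ) + r b + 1/2)) := fun h => by
      simpa [lo, hi, sub_eq_add_neg, add_assoc] using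
        disjoint_Icc_half_of_add_one_lt (a := lo _) (d := hi _) h
    rcases hjk with h | h
    · exact key h
    · exact (key h).symm
  · have hsum : totalLength lo hi L = ∑ k ∈ L, (2 * (r k : ℤ) + 1) :=
      Finset.sum_congr rfl fun k _ => by simp only [lo, hi]; ring
    have : ((m : ℤ) : ℝ) + 1 ≤ 2 * ∑ k ∈ L, (2 * (r k : ℝ) + 1) := by
      exact_mod_cast hsum ▸ hlen
    push_cast at this
    linarith
end
end
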